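/- arXiv:1207.5155 — 2 statements merged into one kernel-verified Lean document; each statement's English description precedes it below -/
import Mathlib

section
/- For every real ε > 0 there exists a constant c ∈ ℕ such that for every (finite) tree T and every list assignment {L_v}_{v ∈ V(T)} with |L_v| ≥ c for every vertex v, there exists a coloring f of T with f(v) ∈ L_v for every vertex v that is x^{2+ε}-free, i.e., no simple path in T has a color sequence of the form x^{2+ε}. -/
/-- A finite sequence is of the form `x^r` (for a real `r ≥ 1`) if it consists of
`⌊r⌋` consecutive copies of a nonempty base `x`, followed by the prefix of `x` of
length `⌈frac(r)·|x|⌉`, where `frac(r)` is the fractional part of `r`.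
(Equivalently: ⌈r⌉ blocks, all equal to the base except the last, which is the
prescribed prefix of the base.) -/
def IsFormPow (r : ℝ) (l : List ℕ) : Prop :=
  ∃ x : List ℕ, x ≠ [] ∧
    l = (List.replicate ⌊r⌋₊ x).flatten ++ x.take ⌈Int.fract r * (x.length : ℝ)⌉₊

/-!
Put `d = ⌈2/ε⌉`. Root the tree and colour it from the root down so that the word of colours read
from any vertex up to the root never begins with a block of period `n` and length
`n + ⌈n/d⌉`. A path in a rooted tree climbs to a peak and then descends, so if its colours
form `x^{2+ε}` with `|x| = n`, one of its two monotone halves has at least `n + ⌈n/d⌉` vertices;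
that half is a prefix of the upward word of its lower end and has period `n`, a contradiction.

The colouring is greedy, controlled by the potential `∑ₚ C ^ (runₚ - ⌈p/d⌉)` of the upward word,
where `C = 4d + 1` and `runₚ` is the length of the initial stretch of period `p`. While the
potential is at most `1/2` no run reaches its threshold. Putting a new colour in front multiplies
the term of `p` by `C` for the one colour that extends the run, and resets it to `C ^ (-⌈p/d⌉)`
for every other colour. Since `∑ₚ C ^ (-⌈p/d⌉) ≤ d / (C - 1) = 1/4`, averaging over a list of
`2C` colours finds one that keeps the potential at most `1/2`.
-/
namespace List

variable {α : Type*}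

theorem hasPeriod_iff_drop_prefix {w : List α} {p : ℕ} : w.HasPeriod p ↔ w.drop p <+: w := by
  refine ⟨HasPeriod.drop_prefix p, fun h => ?_⟩
  rw [HasPeriod]
  conv_lhs => rw [← take_append_drop p w]
  exact (prefix_append_right_inj _).2 h

theorem HasPeriod.take {w : List α} {p : ℕ} (h : w.HasPeriod p) (k : ℕ) :
    (w.take k).HasPeriod p :=
  h.infix (take_prefix k w).isInfix

theorem HasPeriod.reverse {w : List α} {p : ℕ} (h : w.HasPeriod p) : w.reverse.HasPeriod p := by
  have hdrop : w.take (w.length - p) = w.drop p := by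
    rw [prefix_iff_eq_take.1 (h.drop_prefix p), length_drop]
  rw [hasPeriod_iff_drop_prefix, drop_reverse, hdrop]
  conv_rhs => rw [← take_append_drop p w, reverse_append]
  exact prefix_append _ _

theorem hasPeriod_flatten_replicate_append {x y : List α} (hy : y <+: x) (k : ℕ) :
    ((replicate k x).flatten ++ y).HasPeriod x.length := by
  have hshift : ∀ k, (replicate k x).flatten ++ y <+: x ++ ((replicate k x).flatten ++ y) := by
    intro k
    induction k with
    | zero => exact hy.trans (prefix_append x y)
    | succ k ih =>
      rw [replicate_succ, flatten_cons, append_assoc]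
      exact (prefix_append_right_inj x).2 ih
  rw [hasPeriod_iff_drop_prefix]
  cases k with
  | zero => simp [drop_eq_nil_of_le hy.length_le]
  | succ k => simpa [replicate_succ] using hshift k

theorem exists_isChain_take_isChain_drop {R : α → α → Prop} (hR : Relator.RightUnique R)
    {l : List α} (hl : l.Nodup) (hne : l ≠ []) (hadj : l.IsChain fun x y => R x y ∨ R y x) :
    ∃ t < l.length, (l.take (t + 1)).IsChain R ∧ (l.drop t).IsChain fun x y => R y x := by
  induction l with
  | nil => exact absurd rfl hne
  | cons a l ih =>
    cases l with
    | nil => exact ⟨0, by simp, by simp, by simp⟩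
    | cons b l =>
      obtain ⟨hab, hadj⟩ := isChain_cons_cons.1 hadj
      obtain ⟨t, ht, hup, hdown⟩ := ih hl.of_cons (cons_ne_nil _ _) hadj
      rcases hab with hab | hba
      · refine ⟨t + 1, by simpa using ht, ?_, by simpa using hdown⟩
        rw [take_succ_cons]
        exact isChain_cons_cons.2 ⟨hab, by simpa using hup⟩
      · refine ⟨0, by simp, by simp, isChain_cons_cons.2 ⟨hba, ?_⟩⟩
        cases t with
        | zero => simpa using hdown
        | succ t =>
          cases l with
          | nil => simp
          | cons c l =>
            -- going down to `b` and up again would return to `a`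
            obtain rfl : a = c := hR hba (isChain_cons_cons.1 (by simpa using hup)).1
            simp at hl

section DecidableEq

variable [DecidableEq α]

def commonPrefixLength : List α → List α → ℕ
  | a :: l, b :: l' => if a = b then commonPrefixLength l l' + 1 else 0
  | _, _ => 0

theorem length_le_commonPrefixLength {c l l' : List α} (hl : c <+: l) (hl' : c <+: l') :
    c.length ≤ commonPrefixLength l l' := by
  induction c generalizing l l' with
  | nil => exact Nat.zero_le _
  | cons a c ih =>
    obtain ⟨_, rfl⟩ := hl
    obtain ⟨_, rfl⟩ := hl'
    simpa [commonPrefixLength] using ih (prefix_append _ _) (prefix_append _ _)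

/-- The largest `k ≤ σ.length - p` such that `σ.take (p + k)` has period `p`. -/
def periodRun (p : ℕ) (σ : List α) : ℕ := commonPrefixLength σ (σ.drop p)

theorem periodRun_succ_cons (p : ℕ) (a : α) (σ : List α) :
    periodRun (p + 1) (a :: σ) = if σ[p]? = some a then periodRun (p + 1) σ + 1 else 0 := by
  rw [periodRun, periodRun, drop_succ_cons, ← head?_drop, ← tail_drop]
  cases σ.drop p with
  | nil => simp [commonPrefixLength]
  | cons b τ => simp [commonPrefixLength, eq_comm]

theorem periodRun_of_length_le {p : ℕ} {σ : List α} (h : σ.length ≤ p) : periodRun p σ = 0 := by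
  rw [periodRun, drop_eq_nil_of_le h]
  cases σ <;> rfl

theorem HasPeriod.sub_le_periodRun {n : ℕ} {l c : List α} (h : l.HasPeriod n) (hc : l <+: c) :
    l.length - n ≤ periodRun n c := by
  rw [← length_drop]
  exact length_le_commonPrefixLength ((h.drop_prefix n).trans hc) (hc.drop n)

end DecidableEq

end List

theorem IsFormPow.exists_hasPeriod {r : ℝ} (hr : 0 ≤ r) {l : List ℕ} (h : IsFormPow r l) :
    ∃ n : ℕ, 0 < n ∧ r * n ≤ l.length ∧ l.HasPeriod n := by
  obtain ⟨x, hx, rfl⟩ := h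
  have hceil : ⌈Int.fract r * x.length⌉₊ ≤ x.length :=
    Nat.ceil_le.2 (mul_le_of_le_one_left (Nat.cast_nonneg _) (Int.fract_lt_one r).le)
  refine ⟨x.length, List.length_pos_iff.2 hx, ?_,
    List.hasPeriod_flatten_replicate_append (List.take_prefix _ _) _⟩
  have hr' : r = ⌊r⌋₊ + Int.fract r := by
    rw [natCast_floor_eq_intCast_floor hr, Int.floor_add_fract]
  simp only [List.length_append, List.length_flatten, List.map_replicate, List.sum_replicate,
    smul_eq_mul, List.length_take, min_eq_left hceil, Nat.cast_add, Nat.cast_mul]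
  nth_rw 1 [hr']
  linarith [Nat.le_ceil (Int.fract r * x.length)]

theorem Finset.sum_range_mul_ceilDiv {M : Type*} [AddCommMonoid M] (f : ℕ → M) (d m : ℕ) :
    ∑ p ∈ range (d * m), f ((p + 1) ⌈/⌉ d) = d • ∑ j ∈ range m, f (j + 1) := by
  induction m with
  | zero => simp
  | succ m ih =>
    have hblock : ∀ x ∈ range d, f ((d * m + x + 1) ⌈/⌉ d) = f (m + 1) := by
      intro x hx
      rw [mem_range] at hx
      rw [Nat.ceilDiv_eq_add_pred_div, show d * m + x + 1 + d - 1 = x + d + d * m by omega,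
        Nat.add_mul_div_left _ _ (by omega), Nat.div_eq_of_lt_le (k := 1) (by omega) (by omega),
        add_comm]
    rw [mul_add_one, sum_range_add, ih, sum_congr rfl hblock, sum_range_succ, sum_const,
      card_range, smul_add]

namespace RepetitionFree

open Finset
open List (periodRun periodRun_succ_cons periodRun_of_length_le)

theorem sum_range_inv_pow_ceilDiv_le {d : ℕ} (hd : 0 < d) (m : ℕ) :
    ∑ p ∈ range m, ((4 * d + 1 : ℚ) ^ ((p + 1) ⌈/⌉ d))⁻¹ ≤ 1 / 4 := by
  set x : ℚ := (4 * d + 1)⁻¹ with hx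
  have hx0 : 0 ≤ x := by positivity
  have hx1 : x < 1 := inv_lt_one_of_one_lt₀ (by norm_cast; omega)
  have hgeom : ∑ j ∈ range m, x ^ (j + 1) ≤ x / (1 - x) := by
    simpa [sum_Ico_eq_sum_range, add_comm] using
      geom_sum_Ico_le_of_lt_one (m := 1) (n := m + 1) hx0 hx1
  calc ∑ p ∈ range m, ((4 * d + 1 : ℚ) ^ ((p + 1) ⌈/⌉ d))⁻¹
      ≤ ∑ p ∈ range (d * m), x ^ ((p + 1) ⌈/⌉ d) := by
        simp_rw [hx, inv_pow]
        exact sum_le_sum_of_subset_of_nonneg (range_subset_range.2 (Nat.le_mul_of_pos_left m hd))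
          fun _ _ _ => by positivity
    _ = d * ∑ j ∈ range m, x ^ (j + 1) := by rw [sum_range_mul_ceilDiv, nsmul_eq_mul]
    _ ≤ d * (x / (1 - x)) := by gcongr
    _ = 1 / 4 := by rw [hx]; field_simp; ring

variable {α : Type*} [DecidableEq α]

def periodWeight (d : ℕ) (σ : List α) (p : ℕ) : ℚ :=
  (4 * d + 1 : ℚ) ^ periodRun (p + 1) σ / (4 * d + 1 : ℚ) ^ ((p + 1) ⌈/⌉ d)

def potential (d : ℕ) (σ : List α) : ℚ := ∑ p ∈ range σ.length, periodWeight d σ p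

theorem periodWeight_nonneg (d : ℕ) (σ : List α) (p : ℕ) : 0 ≤ periodWeight d σ p := by
  unfold periodWeight; positivity

theorem periodWeight_cons (d p : ℕ) (a : α) (σ : List α) :
    periodWeight d (a :: σ) p = if σ[p]? = some a then (4 * d + 1 : ℚ) * periodWeight d σ p
      else ((4 * d + 1 : ℚ) ^ ((p + 1) ⌈/⌉ d))⁻¹ := by
  rw [periodWeight, periodWeight, periodRun_succ_cons]
  split_ifs
  · rw [pow_succ, mul_comm, mul_div_assoc]
  · rw [pow_zero, one_div]

theorem sum_periodWeight_cons_le (d p : ℕ) (σ : List α) (S : Finset α) :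
    ∑ a ∈ S, periodWeight d (a :: σ) p ≤
      (4 * d + 1 : ℚ) * periodWeight d σ p + #S * ((4 * d + 1 : ℚ) ^ ((p + 1) ⌈/⌉ d))⁻¹ := by
  set w := (4 * d + 1 : ℚ) * periodWeight d σ p
  have hw : 0 ≤ w := mul_nonneg (by positivity) (periodWeight_nonneg d σ p)
  have hmatch : ∑ a ∈ S, (if σ[p]? = some a then w else 0) ≤ w := by
    cases σ[p]? with
    | none => simpa using hw
    | some b =>
      simp only [Option.some_inj, sum_ite_eq]
      split_ifs
      exacts [le_rfl, hw]
  calc ∑ a ∈ S, periodWeight d (a :: σ) p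
      ≤ ∑ a ∈ S, ((if σ[p]? = some a then w else 0) + ((4 * d + 1 : ℚ) ^ ((p + 1) ⌈/⌉ d))⁻¹) := by
        refine sum_le_sum fun a _ => ?_
        rw [periodWeight_cons]
        split_ifs
        · exact le_add_of_nonneg_right (by positivity)
        · rw [zero_add]
    _ ≤ _ := by
        rw [sum_add_distrib, sum_const, nsmul_eq_mul]
        gcongr

theorem sum_potential_cons_le {d : ℕ} (hd : 0 < d) (σ : List α) (S : Finset α) :
    ∑ a ∈ S, potential d (a :: σ) ≤ (4 * d + 1 : ℚ) * potential d σ + #S / 4 := by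
  set base : ℕ → ℚ := fun p => ((4 * d + 1 : ℚ) ^ ((p + 1) ⌈/⌉ d))⁻¹
  have hlast (a : α) : periodWeight d (a :: σ) σ.length = base σ.length := by
    rw [periodWeight_cons, if_neg (by simp)]
  calc ∑ a ∈ S, potential d (a :: σ)
      = ∑ p ∈ range σ.length, ∑ a ∈ S, periodWeight d (a :: σ) p + #S * base σ.length := by
        simp only [potential, List.length_cons, sum_range_succ, hlast, sum_add_distrib, sum_const,
          nsmul_eq_mul]
        rw [sum_comm]
    _ ≤ ∑ p ∈ range σ.length, ((4 * d + 1 : ℚ) * periodWeight d σ p + #S * base p) +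
          #S * base σ.length := by
        gcongr with p
        exact sum_periodWeight_cons_le d p σ S
    _ = (4 * d + 1 : ℚ) * potential d σ + #S * ∑ p ∈ range (σ.length + 1), base p := by
        rw [sum_add_distrib, sum_range_succ, potential, mul_sum, mul_add, mul_sum, add_assoc]
    _ ≤ (4 * d + 1 : ℚ) * potential d σ + #S * (1 / 4) := by
        gcongr
        exact sum_range_inv_pow_ceilDiv_le hd _
    _ = (4 * d + 1 : ℚ) * potential d σ + #S / 4 := by ring

theorem exists_potential_cons_le {d : ℕ} (hd : 0 < d) {σ : List α} (hσ : potential d σ ≤ 1 / 2)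
    {S : Finset α} (hS : 2 * (4 * d + 1) ≤ #S) : ∃ a ∈ S, potential d (a :: σ) ≤ 1 / 2 := by
  refine exists_le_of_sum_le (card_pos.1 (by omega)) ?_
  have hS' : 2 * (4 * d + 1 : ℚ) ≤ #S := by exact_mod_cast hS
  calc ∑ a ∈ S, potential d (a :: σ) ≤ (4 * d + 1 : ℚ) * potential d σ + #S / 4 :=
        sum_potential_cons_le hd σ S
    _ ≤ (4 * d + 1 : ℚ) * (1 / 2) + #S / 4 := by gcongr
    _ ≤ ∑ _a ∈ S, (1 / 2 : ℚ) := by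
        rw [sum_const, nsmul_eq_mul]
        linarith

theorem periodRun_lt_ceilDiv {d : ℕ} (hd : 0 < d) {σ : List α} (hσ : potential d σ ≤ 1 / 2)
    {p : ℕ} (hp : 0 < p) : periodRun p σ < p ⌈/⌉ d := by
  obtain ⟨p, rfl⟩ := Nat.exists_eq_add_one.2 hp
  by_cases hlen : p < σ.length
  · by_contra! hrun
    have hweight : 1 ≤ periodWeight d σ p := by
      rw [periodWeight, one_le_div (by positivity)]
      exact pow_le_pow_right₀ (by norm_cast; omega) hrun
    have : periodWeight d σ p ≤ potential d σ :=
      single_le_sum (fun q _ => periodWeight_nonneg d σ q) (mem_range.2 hlen)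
    linarith
  · rw [periodRun_of_length_le (by omega), Nat.pos_iff_ne_zero, Ne, ← Nat.le_zero,
      ceilDiv_le_iff_le_mul hd]
    omega

theorem two_mul_ceilDiv_lt {ε : ℝ} (hε : 0 < ε) {d : ℕ} (hd : 2 / ε ≤ d) (n : ℕ) :
    2 * ((n ⌈/⌉ d : ℕ) : ℝ) < ε * n + 2 := by
  have hd0 : 0 < d := Nat.cast_pos.1 ((by positivity : (0 : ℝ) < 2 / ε).trans_le hd)
  have hεd : 2 ≤ ε * d := by rwa [div_le_iff₀ hε, mul_comm] at hd
  obtain hk | hk := Nat.eq_zero_or_pos (n ⌈/⌉ d)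
  · rw [hk, Nat.cast_zero, mul_zero]
    positivity
  · have hlt : d * (n ⌈/⌉ d - 1) < n := by
      by_contra! h
      have := (ceilDiv_le_iff_le_mul hd0).2 h
      omega
    have hlt' : (d : ℝ) * ((n ⌈/⌉ d : ℕ) - 1) < n := by
      rw [← Nat.cast_pred hk]
      exact_mod_cast hlt
    nlinarith

end RepetitionFree

namespace SimpleGraph

variable {V : Type*} {G : SimpleGraph V}

structure Rooting (G : SimpleGraph V) where
  depth : V → ℕ
  parent : V → V
  depth_parent_lt : ∀ v, depth v ≠ 0 → depth (parent v) < depth v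
  adj : ∀ ⦃x y⦄, G.Adj x y → (depth x ≠ 0 ∧ parent x = y) ∨ (depth y ≠ 0 ∧ parent y = x)

theorem IsTree.nonempty_rooting (hG : G.IsTree) : Nonempty G.Rooting := by
  classical
  obtain ⟨r⟩ := hG.connected.nonempty
  choose q hq hqlen using fun v => (hG.connected r v).exists_path_of_dist
  have hparent : ∀ ⦃x y⦄, G.Adj x y → G.dist r x = G.dist r y + 1 → (q x).penultimate = y := by
    intro x y hxy hdist
    refine (hG.isAcyclic.eq_penultimate_of_adj_end (hq x) hxy ?_).symm
    by_contra hy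
    have hx := hG.isAcyclic.mem_support_of_ne_mem_support_of_adj_of_isPath (hq y) (hq x) hxy.symm hy
    have := (dist_le ((q y).takeUntil x hx)).trans ((q y).length_takeUntil_le_length hx)
    have := hqlen y
    omega
  refine ⟨⟨G.dist r, fun v => (q v).penultimate, fun v hv => ?_, fun x y hxy => ?_⟩⟩
  · have := dist_le ((q v).take ((q v).length - 1))
    rw [Walk.take_length] at this
    have := hqlen v
    change G.dist r ((q v).getVert _) < _
    omega
  · rcases hG.dist_eq_dist_add_one_of_adj r hxy with h | h
    · exact .inl ⟨by omega, hparent hxy h⟩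
    · exact .inr ⟨by omega, hparent hxy.symm h⟩

namespace Rooting

variable (T : G.Rooting)

def StepUp (x y : V) : Prop := T.depth x ≠ 0 ∧ T.parent x = y

def ancestors (v : V) : List V :=
  v :: if _ : T.depth v = 0 then [] else ancestors (T.parent v)
termination_by T.depth v
decreasing_by exact T.depth_parent_lt v ‹_›

theorem cons_tail_ancestors (v : V) : v :: (T.ancestors v).tail = T.ancestors v := by
  rw [ancestors, List.tail_cons]

theorem ancestors_of_depth_eq_zero {v : V} (hv : T.depth v = 0) : T.ancestors v = [v] := by
  rw [ancestors, dif_pos hv]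

theorem ancestors_of_depth_ne_zero {v : V} (hv : T.depth v ≠ 0) :
    T.ancestors v = v :: T.ancestors (T.parent v) := by
  rw [ancestors, dif_neg hv]

theorem induction {P : V → Prop} (h : ∀ v, (T.depth v ≠ 0 → P (T.parent v)) → P v) (v : V) :
    P v := by
  induction hk : T.depth v using Nat.strong_induction_on generalizing v with
  | _ k ih => exact h v fun hv => ih _ (hk ▸ T.depth_parent_lt v hv) _ rfl

theorem isPrefix_ancestors {v : V} {l : List V} (h : (v :: l).IsChain T.StepUp) :
    v :: l <+: T.ancestors v := by
  induction l generalizing v with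
  | nil =>
    rw [← T.cons_tail_ancestors]
    exact (List.prefix_cons_inj v).2 List.nil_prefix
  | cons w l ih =>
    obtain ⟨⟨hv, rfl⟩, hl⟩ := List.isChain_cons_cons.1 h
    rw [T.ancestors_of_depth_ne_zero hv]
    exact (List.prefix_cons_inj v).2 (ih hl)

theorem exists_forall_good_map_ancestors {α : Type*} (L : V → Set α) (Good : List α → Prop)
    (hnil : Good []) (hext : ∀ v σ, Good σ → ∃ a ∈ L v, Good (a :: σ)) :
    ∃ f : V → α, (∀ v, f v ∈ L v) ∧ ∀ v, Good ((T.ancestors v).map f) := by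
  choose pick hpick using fun v (σ : Subtype Good) => hext v σ.1 σ.2
  let extend (v : V) (σ : Subtype Good) : Subtype Good := ⟨pick v σ :: σ.1, (hpick v σ).2⟩
  let wordAbove (v : V) : Subtype Good := (T.ancestors v).tail.foldr extend ⟨[], hnil⟩
  let f (v : V) : α := pick v (wordAbove v)
  have hword : ∀ v, (T.ancestors v).map f = f v :: (wordAbove v).1 := by
    refine T.induction fun v ih => ?_
    by_cases hv : T.depth v = 0
    · simp [wordAbove, T.ancestors_of_depth_eq_zero hv]
    · have hstep : wordAbove v = extend (T.parent v) (wordAbove (T.parent v)) := by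
        simp only [wordAbove, T.ancestors_of_depth_ne_zero hv, List.tail_cons]
        rw [← T.cons_tail_ancestors (T.parent v), List.foldr_cons, List.tail_cons]
      rw [T.ancestors_of_depth_ne_zero hv, List.map_cons, ih hv, hstep]
  exact ⟨f, fun v => (hpick v (wordAbove v)).1, fun v => hword v ▸ (hpick v (wordAbove v)).2⟩

theorem exists_peak {u w : V} {p : G.Walk u w} (hp : p.IsPath) :
    ∃ t ≤ p.length, (p.support.take (t + 1)).IsChain T.StepUp ∧
      (p.reverse.support.take (p.length - t + 1)).IsChain T.StepUp := by
  obtain ⟨t, ht, hup, hdown⟩ := List.exists_isChain_take_isChain_drop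
    (fun _ _ _ hxy hxz => hxy.2.symm.trans hxz.2) hp.support_nodup (by simp)
    (p.isChain_adj_support.imp T.adj)
  rw [Walk.length_support] at ht
  refine ⟨t, by omega, hup, ?_⟩
  rwa [Walk.support_reverse, List.take_reverse, Walk.length_support,
    show p.length + 1 - (p.length - t + 1) = t by omega, List.isChain_reverse]

theorem sub_le_periodRun {α : Type*} [DecidableEq α] {f : V → α} {n k : ℕ} {u w : V}
    (p : G.Walk u w) (hk : k ≤ p.length) (hup : (p.support.take (k + 1)).IsChain T.StepUp)
    (hper : (p.support.map f).HasPeriod n) :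
    k + 1 - n ≤ List.periodRun n ((T.ancestors u).map f) := by
  rw [← p.cons_tail_support, List.take_succ_cons] at hup
  have hprefix := (T.isPrefix_ancestors hup).map f
  rw [← List.take_succ_cons, p.cons_tail_support, List.map_take] at hprefix
  have hlen : (p.support.map f).length = p.length + 1 := by simp
  simpa [hlen, hk] using (hper.take (k + 1)).sub_le_periodRun hprefix

end Rooting

end SimpleGraph

open RepetitionFree SimpleGraph in
/-- For every `ε > 0` there is a constant `c` such that every finite tree admits,
for any lists of size at least `c`, a coloring chosen from the lists in which no
simple path has a color sequence of the form `x^{2+ε}`. -/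
theorem x_two_plus_eps_free_choice_trees :
    ∀ ε : ℝ, 0 < ε → ∃ c : ℕ,
      ∀ (V : Type) [Fintype V] (G : SimpleGraph V),
        G.IsTree →
        ∀ L : V → Finset ℕ, (∀ v : V, c ≤ (L v).card) →
        ∃ f : V → ℕ, (∀ v : V, f v ∈ L v) ∧
          ∀ (u w : V) (p : G.Walk u w), p.IsPath →
            ¬ IsFormPow (2 + ε) (p.support.map f) := by
  intro ε hε
  set d := ⌈2 / ε⌉₊
  have hd : 0 < d := Nat.ceil_pos.2 (by positivity)
  refine ⟨2 * (4 * d + 1), fun V _ G hG L hL => ?_⟩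
  obtain ⟨T⟩ := hG.nonempty_rooting
  obtain ⟨f, hfL, hgood⟩ := T.exists_forall_good_map_ancestors (fun v => (L v : Set ℕ))
    (fun σ => potential d σ ≤ 1 / 2) (by simp [potential])
    fun v σ hσ => exists_potential_cons_le hd hσ (hL v)
  refine ⟨f, hfL, fun u w p hp hpow => ?_⟩
  obtain ⟨n, hn, hlen, hper⟩ := hpow.exists_hasPeriod (by positivity)
  obtain ⟨t, ht, hup, hdown⟩ := T.exists_peak hp
  have hu := (T.sub_le_periodRun p ht hup hper).trans_lt (periodRun_lt_ceilDiv hd (hgood u) hn)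
  have hw := (T.sub_le_periodRun p.reverse (by simp) hdown
    (by simpa [List.map_reverse] using hper.reverse)).trans_lt (periodRun_lt_ceilDiv hd (hgood w) hn)
  have hsum : p.length + 4 ≤ 2 * n + 2 * (n ⌈/⌉ d) := by omega
  have hsum' : (p.length + 4 : ℝ) ≤ 2 * n + 2 * (n ⌈/⌉ d : ℕ) := by exact_mod_cast hsum
  rw [List.length_map, Walk.length_support, Nat.cast_succ] at hlen
  linarith [two_mul_ceilDiv_lt hε (Nat.le_ceil _) n]
end

section
/- Let ε > 0, let T be a rooted tree and let f be a coloring of its vertices. If some simple path in T has a color sequence of the form x^{2+ε}, then some vertical path in T has a color sequence of the form x^{1+ε/2}. (Indeed, at least half of the vertices of the offending simple path form a vertical path whose color sequence is of the form x^{1+ε/2}.) -/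
/-- In a graph `G` rooted at `root`, `u` is a descendant of `v` if every simple
path from `u` to the root contains `v` (in a tree the simple path is unique). -/
def IsDescendant {V : Type} (G : SimpleGraph V) (root u v : V) : Prop :=
  ∀ p : G.Walk u root, p.IsPath → v ∈ p.support

/-- A simple path is vertical if its first vertex is a descendant of its last
vertex or vice versa. -/
def IsVerticalPath {V : Type} (G : SimpleGraph V) (root : V) {u w : V}
    (p : G.Walk u w) : Prop :=
  p.IsPath ∧ (IsDescendant G root u w ∨ IsDescendant G root w u)

/-- `n` is a period of `l`, i.e. `l[i + n] = l[i]` whenever both sides are defined. -/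
def HasPeriod {α : Type*} (l : List α) (n : ℕ) : Prop :=
  l.drop n <+: l

namespace HasPeriod

variable {α : Type*} {l : List α} {n : ℕ}

theorem take (h : HasPeriod l n) (m : ℕ) : HasPeriod (l.take m) n := by
  unfold HasPeriod at *
  rw [List.drop_take]
  exact (h.take _).trans (List.take_prefix_take_left (Nat.sub_le m n))

theorem drop (h : HasPeriod l n) (m : ℕ) : HasPeriod (l.drop m) n := by
  unfold HasPeriod at *
  rw [List.drop_drop, Nat.add_comm, ← List.drop_drop]
  exact h.drop m

theorem eq_flatten_replicate_append_take {x : List α} (hx : x.length = n) (h : HasPeriod l n)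
    (hlx : l.take n <+: x) {A C : ℕ} (hC : C ≤ n) (hl : l.length = A * n + C) :
    l = (List.replicate A x).flatten ++ x.take C := by
  induction A generalizing l with
  | zero =>
    rw [Nat.zero_mul, Nat.zero_add] at hl
    rw [List.take_of_length_le (by omega)] at hlx
    simpa [hl] using List.prefix_iff_eq_take.1 hlx
  | succ A ih =>
    have hx' : l.take n = x :=
      hlx.eq_of_length (by rw [List.length_take, hx, hl, Nat.succ_mul]; omega)
    have htail := ih (h.drop n) ((List.IsPrefix.take h n).trans hlx)
      (by rw [List.length_drop, hl, Nat.succ_mul]; omega)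
    rw [← List.take_append_drop n l, htail, hx', List.replicate_succ, List.flatten_cons,
      List.append_assoc]

end HasPeriod

theorem hasPeriod_flatten_replicate_append_take {α : Type*} (x : List α) (A C : ℕ) :
    HasPeriod ((List.replicate A x).flatten ++ x.take C) x.length := by
  cases A with
  | zero =>
    simp only [HasPeriod, List.replicate_zero, List.flatten_nil, List.nil_append]
    rw [List.drop_eq_nil_of_le (List.length_take_le' C x)]
    exact List.nil_prefix
  | succ A =>
    rw [HasPeriod, List.replicate_succ, List.flatten_cons, List.append_assoc, List.drop_left]
    calc (List.replicate A x).flatten ++ x.take C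
        <+: (List.replicate A x).flatten ++ x :=
          (List.prefix_append_right_inj _).2 (List.take_prefix _ _)
      _ = x ++ (List.replicate A x).flatten := by
          rw [← List.flatten_concat, ← List.replicate_succ', List.replicate_succ,
            List.flatten_cons]
      _ <+: x ++ ((List.replicate A x).flatten ++ x.take C) :=
          (List.prefix_append_right_inj _).2 (List.prefix_append _ _)

noncomputable def powLength (r : ℝ) (n : ℕ) : ℕ :=
  ⌊r⌋₊ * n + ⌈Int.fract r * n⌉₊

theorem ceil_fract_mul_le (r : ℝ) (n : ℕ) : ⌈Int.fract r * n⌉₊ ≤ n :=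
  Nat.ceil_le.2 (mul_le_of_le_one_left n.cast_nonneg (Int.fract_lt_one r).le)

section powLength

variable {r : ℝ}

theorem natCast_floor_add_fract (hr : 0 ≤ r) : (⌊r⌋₊ : ℝ) + Int.fract r = r := by
  rw [natCast_floor_eq_intCast_floor hr, Int.floor_add_fract]

theorem le_powLength (hr : 0 ≤ r) (n : ℕ) : r * n ≤ powLength r n := by
  have hceil := Nat.le_ceil (Int.fract r * n)
  calc r * n = ⌊r⌋₊ * n + Int.fract r * n := by rw [← add_mul, natCast_floor_add_fract hr]
    _ ≤ powLength r n := by push_cast [powLength]; linarith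

theorem powLength_lt (hr : 0 ≤ r) (n : ℕ) : (powLength r n : ℝ) < r * n + 1 := by
  have hceil := Nat.ceil_lt_add_one (mul_nonneg (Int.fract_nonneg r) n.cast_nonneg)
  calc (powLength r n : ℝ) = ⌊r⌋₊ * n + ⌈Int.fract r * n⌉₊ := by
        push_cast [powLength]; rfl
    _ < ⌊r⌋₊ * n + Int.fract r * n + 1 := by linarith
    _ = r * n + 1 := by rw [← add_mul, natCast_floor_add_fract hr]

theorem one_le_powLength (hr : 1 ≤ r) {n : ℕ} (hn : 0 < n) : 1 ≤ powLength r n := by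
  have hfloor := (Nat.one_le_floor_iff r).2 hr
  unfold powLength
  nlinarith

theorem two_mul_powLength_le (hr : 0 ≤ r) (n : ℕ) :
    2 * powLength r n ≤ powLength (2 * r) n + 1 := by
  have hlt := powLength_lt hr n
  have hle := le_powLength (by positivity : 0 ≤ 2 * r) n
  have : ((2 * powLength r n : ℕ) : ℝ) < (powLength (2 * r) n + 2 : ℕ) := by
    push_cast; linarith
  exact Nat.le_of_lt_succ (by exact_mod_cast this)

end powLength

theorem isFormPow_iff {r : ℝ} (hr : 1 ≤ r) {l : List ℕ} :
    IsFormPow r l ↔ ∃ n, 0 < n ∧ HasPeriod l n ∧ l.length = powLength r n := by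
  constructor
  · rintro ⟨x, hx, rfl⟩
    refine ⟨x.length, List.length_pos_iff.2 hx,
      hasPeriod_flatten_replicate_append_take x _ _, ?_⟩
    simp [powLength, Nat.min_eq_left (ceil_fract_mul_le r _), Nat.mul_comm]
  · rintro ⟨n, hn, hper, hl⟩
    have hfloor : 1 ≤ ⌊r⌋₊ := (Nat.one_le_floor_iff r).2 hr
    have hx : (l.take n).length = n := List.length_take_of_le (by rw [hl, powLength]; nlinarith)
    refine ⟨l.take n, List.ne_nil_of_length_pos (by omega), ?_⟩
    rw [hx]
    exact hper.eq_flatten_replicate_append_take hx (List.prefix_refl _) (ceil_fract_mul_le r n) hl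

namespace SimpleGraph

section

variable {V : Type*} {G : SimpleGraph V}

theorem Walk.IsPath.append {u v w : V} {p : G.Walk u v} {q : G.Walk v w} (hp : p.IsPath)
    (hq : q.IsPath) (h : ∀ z ∈ p.support, z ∈ q.support → z = v) : (p.append q).IsPath := by
  have hq' := hq.support_nodup
  rw [← q.cons_tail_support, List.nodup_cons] at hq'
  rw [Walk.isPath_def, Walk.support_append, List.nodup_append]
  refine ⟨hp.support_nodup, hq'.2, ?_⟩
  rintro z hzp _ hzq rfl
  exact hq'.1 (h z hzp (List.mem_of_mem_tail hzq) ▸ hzq)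

theorem Walk.exists_getVert_forall_mem_support_le {β : Type*} [LinearOrder β] {u w : V}
    (p : G.Walk u w) (g : V → β) :
    ∃ k ≤ p.length, ∀ z ∈ p.support, g (p.getVert k) ≤ g z := by
  obtain ⟨k, hk, hmin⟩ := (Finset.range (p.length + 1)).exists_min_image (g ∘ p.getVert)
    Finset.nonempty_range_add_one
  refine ⟨k, Nat.lt_succ_iff.1 (Finset.mem_range.1 hk), fun z hz => ?_⟩
  obtain ⟨j, rfl, hj⟩ := Walk.mem_support_iff_exists_getVert.1 hz
  exact hmin j (Finset.mem_range.2 (Nat.lt_succ_of_le hj))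

end

section tree

variable {V : Type} {G : SimpleGraph V}

theorem IsTree.isDescendant_of_mem_support (hT : G.IsTree) {root u t v : V} {q : G.Walk u t}
    (hq : q.IsPath)
    (htop : ∀ z ∈ q.support, G.dist t root ≤ G.dist z root) (hv : v ∈ q.support) :
    IsDescendant G root u v := by
  obtain ⟨g, hg, hglen⟩ := hT.connected.exists_path_of_dist t root
  -- a vertex of `g` other than `t` is strictly closer to the root than `t`
  have hmeet : ∀ z ∈ q.support, z ∈ g.support → z = t := by
    classical
    intro z hzq hzg
    have hsplit := congrArg Walk.length (g.take_spec hzg)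
    rw [Walk.length_append] at hsplit
    have hdrop := G.dist_le (g.dropUntil z hzg)
    have hz := htop z hzq
    exact ((g.takeUntil z hzg).eq_of_length_eq_zero (by omega)).symm
  intro p hp
  obtain rfl : p = q.append g :=
    congrArg Subtype.val <|
      (hT.isAcyclic.subsingleton_path u root).elim ⟨p, hp⟩ ⟨_, hq.append hg hmeet⟩
  exact Walk.support_append q g ▸ List.mem_append_left _ hv

variable {root u w : V} {p : G.Walk u w} {k m : ℕ}

theorem IsTree.isVerticalPath_take (hT : G.IsTree) (hp : p.IsPath)
    (htop : ∀ z ∈ p.support, G.dist (p.getVert k) root ≤ G.dist z root) (hm : m ≤ k) :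
    IsVerticalPath G root (p.take m) := by
  refine ⟨hp.take m, Or.inl (hT.isDescendant_of_mem_support (hp.take k)
    (fun z hz => htop z ?_) ?_)⟩
  · rw [Walk.support_take] at hz
    exact List.mem_of_mem_take hz
  · simpa [Nat.min_eq_right hm] using (p.take k).getVert_mem_support m

theorem IsTree.isVerticalPath_drop (hT : G.IsTree) (hp : p.IsPath)
    (htop : ∀ z ∈ p.support, G.dist (p.getVert k) root ≤ G.dist z root) (hm : k ≤ m) :
    IsVerticalPath G root (p.drop m) := by
  refine ⟨hp.drop m, Or.inr (hT.isDescendant_of_mem_support (hp.drop k).reverse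
    (fun z hz => htop z ?_) ?_)⟩
  · rw [Walk.support_reverse, List.mem_reverse, Walk.drop_support_eq_support_drop_min] at hz
    exact List.mem_of_mem_drop hz
  · simpa [Nat.add_sub_cancel' hm] using (p.drop k).getVert_mem_support (m - k)

end tree

end SimpleGraph

open SimpleGraph

theorem vertical_path_from_x_two_plus_eps_general
    (ε : ℝ) (hε : 0 < ε)
    (V : Type) (G : SimpleGraph V) (root : V)
    (hT : G.IsTree) (f : V → ℕ)
    (h : ∃ (u w : V) (p : G.Walk u w), p.IsPath ∧
      IsFormPow (2 + ε) (p.support.map f)) :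
    ∃ (u w : V) (q : G.Walk u w), IsVerticalPath G root q ∧
      IsFormPow (1 + ε / 2) (q.support.map f) := by
  obtain ⟨u, w, p, hp, hpow⟩ := h
  obtain ⟨n, hn, hper, hlen⟩ := (isFormPow_iff (by linarith)).1 hpow
  have hr : (1 : ℝ) ≤ 1 + ε / 2 := by linarith
  set M := powLength (1 + ε / 2) n
  have hM : 1 ≤ M := one_le_powLength hr hn
  have h2M : 2 * M ≤ p.length + 2 := by
    have := two_mul_powLength_le (by linarith : (0 : ℝ) ≤ 1 + ε / 2) n
    rw [show 2 * (1 + ε / 2) = 2 + ε by ring, ← hlen, List.length_map,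
      Walk.length_support] at this
    omega
  have hpowM : ∀ l, HasPeriod l n → l.length = M → IsFormPow (1 + ε / 2) l :=
    fun l hl hlM => (isFormPow_iff hr).2 ⟨n, hn, hl, hlM⟩
  obtain ⟨k, hk, htop⟩ := p.exists_getVert_forall_mem_support_le (G.dist · root)
  by_cases hcase : M ≤ k + 1
  · refine ⟨u, _, p.take (M - 1), hT.isVerticalPath_take hp htop (by omega), hpowM _ ?_ ?_⟩
    · rw [Walk.support_take, List.map_take]
      exact hper.take _
    · simp only [Walk.support_take, List.length_map, List.length_take, Walk.length_support]
      omega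
  · refine ⟨_, w, p.drop (p.length + 1 - M), hT.isVerticalPath_drop hp htop (by omega),
      hpowM _ ?_ ?_⟩
    · rw [Walk.drop_support_eq_support_drop_min, List.map_drop]
      exact hper.drop _
    · simp only [Walk.drop_support_eq_support_drop_min, List.length_map, List.length_drop,
        Walk.length_support]
      omega

/-- If, in a rooted tree, some simple path has a color sequence of the form
`x^{2+ε}`, then some vertical path has a color sequence of the form `x^{1+ε/2}`. -/
theorem vertical_path_from_x_two_plus_eps
    (ε : ℝ) (hε : 0 < ε)
    (V : Type) [Fintype V] (G : SimpleGraph V) (root : V)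
    (hT : G.IsTree) (f : V → ℕ)
    (h : ∃ (u w : V) (p : G.Walk u w), p.IsPath ∧
      IsFormPow (2 + ε) (p.support.map f)) :
    ∃ (u w : V) (q : G.Walk u w), IsVerticalPath G root q ∧
      IsFormPow (1 + ε / 2) (q.support.map f) :=
  vertical_path_from_x_two_plus_eps_general ε hε V G root hT f h
end
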